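/- arXiv:1903.09546 — 5 statements merged into one kernel-verified Lean document; each statement's English description precedes it below -/
import Mathlib

section
/- Let $\mathcal{T}$ be maximal monotone on a finite dimensional Hilbert space $\mathcal{X}$ with $\Omega = \mathcal{T}^{-1}(0) \neq \emptyset$. Let $\{c_k\}$ be positive numbers bounded away from zero and $\{\mathcal{M}_k\}$ self-adjoint positive definite operators with $(1+\nu_k)\mathcal{M}_k \succeq \mathcal{M}_{k+1}$, $\mathcal{M}_k \succeq \lambda_{\min}\mathcal{I}$ for a summable nonnegative sequence $\{\nu_k\}$ and $\lambda_{\min} > 0$, with $\limsup_k \lambda_{\max}(\mathcal{M}_k) < \infty$. Let $\{z^k\}$ satisfy $\|z^{k+1} - (\mathcal{M}_k + c_k\mathcal{T})^{-1}\mathcal{M}_k z^k\|_{\mathcal{M}_k} \le \epsilon_k$ with $\sum_k \epsilon_k < \infty$. Then $\{z^k\}$ is bounded, $\mathrm{dist}_{\mathcal{M}_{k+1}}(z^{k+1}, \Omega) \le (1+\nu_k)\mathrm{dist}_{\mathcal{M}_k}(z^k, \Omega) + (1+\nu_k)\epsilon_k$ for all $k$, and $z^k$ converges to some $z^\infty$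 with $0 \in \mathcal{T}(z^\infty)$. -/
/-!
For every zero `s` of `T`, the resolvent step `p = (M + c T)⁻¹ M z` is firmly nonexpansive,
`‖p - s‖²_M + ‖z - p‖²_M ≤ ‖z - s‖²_M`. Together with `M_{k+1} ⪯ (1 + ν_k) M_k` and the error
bound this makes `a_k = ‖z^k - s‖_{M_k}` quasi-Fejér, `a_{k+1} ≤ (1 + ν_k) (a_k + ε_k)`, and such a
sequence is bounded (by `exp (∑ ν) (a_0 + ∑ ε)`) and converges. This gives boundedness and the
distance estimate. Since both `a_k` and `‖p^k - s‖_{M_k}` tend to the same limit, firm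
nonexpansiveness forces `z^k - p^k → 0`, so the residuals `w^k ∈ T p^k` tend to `0`. The graph of a
maximal monotone operator is closed, so a cluster point `z^∞` of the bounded sequence is a zero of
`T`; then `‖z^k - z^∞‖_{M_k}` converges and vanishes along a subsequence, hence `z^k → z^∞`.
-/

open scoped RealInnerProductSpace
open Filter Topology Set

theorem sqrt_le_mul_sqrt_of_le_mul {a b t : ℝ} (ht : 1 ≤ t) (h : a ≤ t * b) : √a ≤ t * √b :=
  calc √a ≤ √t * √b := (Real.sqrt_le_sqrt h).trans_eq (Real.sqrt_mul (by linarith) b)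
    _ ≤ t * √b := by gcongr; exact Real.sqrt_le_self_iff.2 (Or.inr ht)

theorem exists_tendsto_of_le_add_of_summable {a η : ℕ → ℝ} (ha : BddBelow (range a))
    (hη : Summable η) (h : ∀ k, a (k + 1) ≤ a k + η k) : ∃ L, Tendsto a atTop (𝓝 L) := by
  set S : ℕ → ℝ := fun k => ∑ i ∈ Finset.range k, η i
  have hS : Tendsto S atTop (𝓝 (∑' i, η i)) := hη.hasSum.tendsto_sum_nat
  have hanti : Antitone (a - S) := antitone_nat_of_succ_le fun k => by
    simp only [Pi.sub_apply, S, Finset.sum_range_succ]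
    linarith [h k]
  have hbdd : BddBelow (range (a - S)) := by
    obtain ⟨m, hm⟩ := ha
    obtain ⟨M, hM⟩ := hS.bddAbove_range
    refine ⟨m - M, ?_⟩
    rintro _ ⟨k, rfl⟩
    show m - M ≤ a k - S k
    linarith [hm (mem_range_self k), hM (mem_range_self k)]
  exact ⟨_, by simpa using (tendsto_atTop_ciInf hanti hbdd).add hS⟩

theorem le_exp_tsum_mul_of_le_one_add_mul {a ν ε : ℕ → ℝ} (ha : ∀ k, 0 ≤ a k)
    (hν : ∀ k, 0 ≤ ν k) (hε : ∀ k, 0 ≤ ε k) (hνs : Summable ν) (hεs : Summable ε)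
    (h : ∀ k, a (k + 1) ≤ (1 + ν k) * (a k + ε k)) (k : ℕ) :
    a k ≤ Real.exp (∑' i, ν i) * (a 0 + ∑' i, ε i) := by
  set V : ℕ → ℝ := fun k => ∑ i ∈ Finset.range k, ν i
  set E : ℕ → ℝ := fun k => ∑ i ∈ Finset.range k, ε i
  have hpartial : ∀ k, a k ≤ Real.exp (V k) * (a 0 + E k) := by
    intro k
    induction k with
    | zero => simp [V, E]
    | succ k ih =>
      have hexp : 1 ≤ Real.exp (V k) := Real.one_le_exp (Finset.sum_nonneg fun i _ => hν i)
      calc a (k + 1) ≤ (1 + ν k) * (a k + ε k) := h k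
        _ ≤ Real.exp (ν k) * (Real.exp (V k) * (a 0 + E k) + Real.exp (V k) * ε k) := by
          gcongr
          · exact add_nonneg (ha k) (hε k)
          · linarith [Real.add_one_le_exp (ν k)]
          · exact le_mul_of_one_le_left (hε k) hexp
        _ = Real.exp (V (k + 1)) * (a 0 + E (k + 1)) := by
          simp only [V, E, Finset.sum_range_succ, Real.exp_add]; ring
  refine (hpartial k).trans ?_
  gcongr
  · exact add_nonneg (ha 0) (Finset.sum_nonneg fun i _ => hε i)
  · exact hνs.sum_le_tsum _ fun i _ => hν i
  · exact hεs.sum_le_tsum _ fun i _ => hε i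

theorem exists_tendsto_of_le_one_add_mul {a ν ε : ℕ → ℝ} (ha : ∀ k, 0 ≤ a k)
    (hν : ∀ k, 0 ≤ ν k) (hε : ∀ k, 0 ≤ ε k) (hνs : Summable ν) (hεs : Summable ε)
    (h : ∀ k, a (k + 1) ≤ (1 + ν k) * (a k + ε k)) : ∃ L, Tendsto a atTop (𝓝 L) := by
  set C := Real.exp (∑' i, ν i) * (a 0 + ∑' i, ε i) + ∑' i, ε i
  refine exists_tendsto_of_le_add_of_summable ⟨0, ?_⟩ ((hνs.mul_right C).add hεs) fun k => ?_
  · rintro _ ⟨k, rfl⟩; exact ha k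
  have hbound : a k + ε k ≤ C :=
    add_le_add (le_exp_tsum_mul_of_le_one_add_mul ha hν hε hνs hεs h k)
      (hεs.le_tsum k fun j _ => hε j)
  linarith [h k, mul_le_mul_of_nonneg_left hbound (hν k)]

theorem tendsto_of_le_of_le_one_add_mul {a b ν ε : ℕ → ℝ} {L : ℝ}
    (ha : Tendsto a atTop (𝓝 L)) (hν0 : ∀ k, 0 ≤ ν k) (hν : Tendsto ν atTop (𝓝 0))
    (hε : Tendsto ε atTop (𝓝 0)) (hba : ∀ k, b k ≤ a k)
    (hab : ∀ k, a (k + 1) ≤ (1 + ν k) * (b k + ε k)) : Tendsto b atTop (𝓝 L) := by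
  have hlower : Tendsto (fun k => a (k + 1) / (1 + ν k) - ε k) atTop (𝓝 L) := by
    have := ((tendsto_add_atTop_iff_nat 1).2 ha).div (tendsto_const_nhds.add hν)
      (by norm_num : (1 : ℝ) + 0 ≠ 0)
    simpa using this.sub hε
  refine tendsto_of_tendsto_of_tendsto_of_le_of_le hlower ha (fun k => ?_) hba
  have : 0 < 1 + ν k := by linarith [hν0 k]
  simp only [sub_le_iff_le_add, div_le_iff₀ this]
  linarith [hab k]

theorem csInf_image_le_mul_add {α : Type*} {S : Set α} {f g : α → ℝ} {a b : ℝ}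
    (hS : S.Nonempty) (hf : BddBelow (f '' S)) (ha : 0 < a) (h : ∀ x ∈ S, f x ≤ a * g x + b) :
    sInf (f '' S) ≤ a * sInf (g '' S) + b := by
  have : (sInf (f '' S) - b) / a ≤ sInf (g '' S) := by
    refine le_csInf (hS.image g) ?_
    rintro _ ⟨x, hx, rfl⟩
    rw [div_le_iff₀ ha]
    linarith [csInf_le hf (mem_image_of_mem f hx), h x hx]
  rw [div_le_iff₀ ha] at this
  linarith

section InnerProductSpace

variable {X : Type*} [NormedAddCommGroup X] [InnerProductSpace ℝ X]

section QuadraticForm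

variable {B : X →ₗ[ℝ] X}

theorem norm_le_sqrt_inner_div {lmin : ℝ} (hlmin : 0 < lmin)
    (hlb : ∀ x, lmin * ‖x‖ ^ 2 ≤ ⟪x, B x⟫) (x : X) : ‖x‖ ≤ √⟪x, B x⟫ / √lmin := by
  rw [le_div_iff₀ (Real.sqrt_pos.2 hlmin), ← Real.sqrt_sq (norm_nonneg x),
    ← Real.sqrt_mul' _ hlmin.le]
  exact Real.sqrt_le_sqrt (by linarith [hlb x])

theorem sqrt_inner_le_sqrt_mul_norm {Λ : ℝ} (hΛ : ∀ x, ⟪x, B x⟫ ≤ Λ * ‖x‖ ^ 2) (x : X) :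
    √⟪x, B x⟫ ≤ √Λ * ‖x‖ := by
  rw [← Real.sqrt_sq (norm_nonneg x), ← Real.sqrt_mul' _ (sq_nonneg _)]
  exact Real.sqrt_le_sqrt (hΛ x)

namespace LinearMap.IsSymmetric

theorem inner_apply_comm (hB : B.IsSymmetric) (x y : X) : ⟪y, B x⟫ = ⟪x, B y⟫ := by
  rw [← hB, real_inner_comm]

theorem inner_add_apply_add (hB : B.IsSymmetric) (x y : X) :
    ⟪x + y, B (x + y)⟫ = ⟪x, B x⟫ + 2 * ⟪x, B y⟫ + ⟪y, B y⟫ := by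
  rw [map_add, inner_add_left, inner_add_right, inner_add_right, hB.inner_apply_comm x y]
  ring

/-- `B z = B p + c • w` with `w ∈ T p` says that `p = (B + c T)⁻¹ B z`. -/
theorem inner_resolvent_add_le (hB : B.IsSymmetric) {z p w s : X} {c : ℝ}
    (hres : B z = B p + c • w) (hc : 0 ≤ c) (hw : 0 ≤ ⟪w, p - s⟫) :
    ⟪p - s, B (p - s)⟫ + ⟪z - p, B (z - p)⟫ ≤ ⟪z - s, B (z - s)⟫ := by
  have hcross : 0 ≤ ⟪z - p, B (p - s)⟫ := by
    rw [← hB, map_sub, hres, add_sub_cancel_left, real_inner_smul_left]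
    exact mul_nonneg hc hw
  rw [← sub_add_sub_cancel z p s, hB.inner_add_apply_add]
  linarith

end LinearMap.IsSymmetric

namespace LinearMap.IsPositive

theorem inner_apply_sq_le (hB : B.IsPositive) (x y : X) :
    ⟪x, B y⟫ ^ 2 ≤ ⟪x, B x⟫ * ⟪y, B y⟫ := by
  have := BilinForm.apply_mul_apply_le_of_forall_zero_le ((innerₗ X).compl₂ B)
    hB.inner_nonneg_right x y
  simp only [compl₂_apply, innerₗ_apply_apply] at this
  rwa [hB.isSymmetric.inner_apply_comm x y, ← sq] at this

theorem sqrt_inner_add_le (hB : B.IsPositive) (x y : X) :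
    √⟪x + y, B (x + y)⟫ ≤ √⟪x, B x⟫ + √⟪y, B y⟫ := by
  have hcross : ⟪x, B y⟫ ≤ √⟪x, B x⟫ * √⟪y, B y⟫ := by
    rw [← Real.sqrt_mul (hB.inner_nonneg_right x)]
    exact Real.le_sqrt_of_sq_le (hB.inner_apply_sq_le x y)
  rw [Real.sqrt_le_left (by positivity), hB.isSymmetric.inner_add_apply_add, add_sq,
    Real.sq_sqrt (hB.inner_nonneg_right x), Real.sq_sqrt (hB.inner_nonneg_right y)]
  linarith

theorem norm_apply_le {Λ : ℝ} (hB : B.IsPositive) (hΛ : ∀ x, ⟪x, B x⟫ ≤ Λ * ‖x‖ ^ 2) (x : X) :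
    ‖B x‖ ≤ Λ * ‖x‖ := by
  rcases eq_or_ne x 0 with rfl | hx
  · simp
  have hΛ0 : 0 ≤ Λ :=
    nonneg_of_mul_nonneg_left ((hB.inner_nonneg_right x).trans (hΛ x)) (by positivity)
  have key : (‖B x‖ ^ 2) ^ 2 ≤ (Λ * ‖x‖ * ‖B x‖) ^ 2 :=
    calc (‖B x‖ ^ 2) ^ 2 = ⟪x, B (B x)⟫ ^ 2 := by
          rw [← hB.isSymmetric, real_inner_self_eq_norm_sq]
      _ ≤ ⟪x, B x⟫ * ⟪B x, B (B x)⟫ := hB.inner_apply_sq_le x (B x)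
      _ ≤ (Λ * ‖x‖ ^ 2) * (Λ * ‖B x‖ ^ 2) :=
          mul_le_mul (hΛ x) (hΛ (B x)) (hB.inner_nonneg_right _) (by positivity)
      _ = (Λ * ‖x‖ * ‖B x‖) ^ 2 := by ring
  rw [pow_le_pow_iff_left₀ (by positivity) (by positivity) two_ne_zero, sq] at key
  rcases (norm_nonneg (B x)).eq_or_lt with h | h
  · rw [← h]; positivity
  · exact le_of_mul_le_mul_right key h

theorem sqrt_inner_resolvent_le (hB : B.IsPositive) {z p w s : X} {c : ℝ}
    (hres : B z = B p + c • w) (hc : 0 ≤ c) (hw : 0 ≤ ⟪w, p - s⟫) :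
    √⟪p - s, B (p - s)⟫ ≤ √⟪z - s, B (z - s)⟫ :=
  Real.sqrt_le_sqrt <| by
    linarith [hB.isSymmetric.inner_resolvent_add_le hres hc hw, hB.inner_nonneg_right (z - p)]

theorem sqrt_inner_sub_le_one_add_mul {B' : X →ₗ[ℝ] X} {ν ε : ℝ} (hB : B.IsPositive)
    (hν : 0 ≤ ν) (hB' : ∀ x, ⟪x, B' x⟫ ≤ (1 + ν) * ⟪x, B x⟫) {z p s : X}
    (hz : √⟪z - p, B (z - p)⟫ ≤ ε) :
    √⟪z - s, B' (z - s)⟫ ≤ (1 + ν) * (√⟪p - s, B (p - s)⟫ + ε) :=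
  calc √⟪z - s, B' (z - s)⟫ ≤ (1 + ν) * √⟪z - s, B (z - s)⟫ :=
        sqrt_le_mul_sqrt_of_le_mul (by linarith) (hB' _)
    _ ≤ (1 + ν) * (√⟪p - s, B (p - s)⟫ + ε) := by
        gcongr
        rw [← sub_add_sub_cancel z p s, add_comm]
        linarith [hB.sqrt_inner_add_le (p - s) (z - p)]

theorem sqrt_inner_step_le {B' : X →ₗ[ℝ] X} {ν ε c : ℝ} (hB : B.IsPositive) (hν : 0 ≤ ν)
    (hB' : ∀ x, ⟪x, B' x⟫ ≤ (1 + ν) * ⟪x, B x⟫) {z z' p w s : X} (hres : B z = B p + c • w)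
    (hc : 0 ≤ c) (hw : 0 ≤ ⟪w, p - s⟫) (hz' : √⟪z' - p, B (z' - p)⟫ ≤ ε) :
    √⟪z' - s, B' (z' - s)⟫ ≤ (1 + ν) * (√⟪z - s, B (z - s)⟫ + ε) :=
  (hB.sqrt_inner_sub_le_one_add_mul hν hB' hz').trans <|
    mul_le_mul_of_nonneg_left (add_le_add_left (hB.sqrt_inner_resolvent_le hres hc hw) _)
      (by linarith)

end LinearMap.IsPositive

end QuadraticForm

theorem mem_of_tendsto_of_maximal_monotone {T : X → Set X}
    (hmono : ∀ x y u v, u ∈ T x → v ∈ T y → 0 ≤ ⟪u - v, x - y⟫)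
    (hmax : ∀ S : X → Set X,
      (∀ x y u v, u ∈ S x → v ∈ S y → 0 ≤ ⟪u - v, x - y⟫) → (∀ x, T x ⊆ S x) → S = T)
    {ι : Type*} {l : Filter ι} [l.NeBot] {p w : ι → X} {x u : X}
    (hp : Tendsto p l (𝓝 x)) (hw : Tendsto w l (𝓝 u)) (hpw : ∀ i, w i ∈ T (p i)) :
    u ∈ T x := by
  have hlim : ∀ y v, v ∈ T y → 0 ≤ ⟪u - v, x - y⟫ := fun y v hv =>
    ge_of_tendsto ((hw.sub tendsto_const_nhds).inner (hp.sub tendsto_const_nhds))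
      (Eventually.of_forall fun i => hmono _ _ _ _ (hpw i) hv)
  let S : X → Set X := fun y => {v | v ∈ T y ∨ (y = x ∧ v = u)}
  have hS : S = T := by
    refine hmax S ?_ fun y v hv => Or.inl hv
    rintro y y' v v' (hv | ⟨rfl, rfl⟩) (hv' | ⟨rfl, rfl⟩)
    · exact hmono _ _ _ _ hv hv'
    · rw [← neg_sub v', ← neg_sub y', inner_neg_neg]
      exact hlim _ _ hv
    · exact hlim _ _ hv'
    · simp
  exact hS ▸ Or.inr ⟨rfl, rfl⟩

variable {lmin Λ : ℝ}

theorem isBounded_range_of_tendsto_sqrt_inner {M : ℕ → X →ₗ[ℝ] X} (hlmin : 0 < lmin)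
    (hlb : ∀ k x, lmin * ‖x‖ ^ 2 ≤ ⟪x, M k x⟫) {z : ℕ → X} {s : X} {L : ℝ}
    (h : Tendsto (fun k => √⟪z k - s, M k (z k - s)⟫) atTop (𝓝 L)) :
    Bornology.IsBounded (range z) := by
  obtain ⟨C, hC⟩ := h.bddAbove_range
  refine (Metric.isBounded_closedBall (x := s) (r := C / √lmin)).subset ?_
  rintro _ ⟨k, rfl⟩
  rw [Metric.mem_closedBall, dist_eq_norm]
  exact (norm_le_sqrt_inner_div hlmin (hlb k) _).trans
    (div_le_div_of_nonneg_right (hC (mem_range_self k)) (Real.sqrt_nonneg _))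

theorem tendsto_zero_of_sqrt_inner {ι : Type*} {l : Filter ι} {M : ι → X →ₗ[ℝ] X} {x : ι → X}
    (hlmin : 0 < lmin) (hlb : ∀ i x, lmin * ‖x‖ ^ 2 ≤ ⟪x, M i x⟫)
    (h : Tendsto (fun i => √⟪x i, M i (x i)⟫) l (𝓝 0)) : Tendsto x l (𝓝 0) :=
  squeeze_zero_norm (fun i => norm_le_sqrt_inner_div hlmin (hlb i) (x i))
    (by simpa using h.div_const √lmin)

theorem tendsto_sqrt_inner_zero {ι : Type*} {l : Filter ι} {M : ι → X →ₗ[ℝ] X} {x : ι → X}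
    (hub : ∀ i x, ⟪x, M i x⟫ ≤ Λ * ‖x‖ ^ 2) (h : Tendsto x l (𝓝 0)) :
    Tendsto (fun i => √⟪x i, M i (x i)⟫) l (𝓝 0) :=
  squeeze_zero (fun _ => Real.sqrt_nonneg _) (fun i => sqrt_inner_le_sqrt_mul_norm (hub i) (x i))
    (by simpa using (tendsto_norm_zero.comp h).const_mul √Λ)

theorem tendsto_resolvent_residual_zero {ι : Type*} {l : Filter ι} {M : ι → X →ₗ[ℝ] X}
    {cmin : ℝ} {c : ι → ℝ} {z p w : ι → X}
    (hM : ∀ i, (M i).IsPositive) (hub : ∀ i x, ⟪x, M i x⟫ ≤ Λ * ‖x‖ ^ 2) (hcmin : 0 < cmin)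
    (hc : ∀ i, cmin ≤ c i) (hres : ∀ i, M i (z i) = M i (p i) + c i • w i)
    (hzp : Tendsto (fun i => z i - p i) l (𝓝 0)) : Tendsto w l (𝓝 0) := by
  refine squeeze_zero_norm (fun i => ?_)
    (by simpa using (tendsto_norm_zero.comp hzp).const_mul (Λ / cmin))
  have hMzp : M i (z i - p i) = c i • w i := by rw [map_sub, hres, add_sub_cancel_left]
  have : cmin * ‖w i‖ ≤ Λ * ‖z i - p i‖ :=
    calc cmin * ‖w i‖ ≤ ‖c i • w i‖ := by
          rw [norm_smul, Real.norm_of_nonneg (hcmin.le.trans (hc i))]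
          exact mul_le_mul_of_nonneg_right (hc i) (norm_nonneg _)
      _ ≤ Λ * ‖z i - p i‖ := hMzp ▸ (hM i).norm_apply_le (hub i) _
  rw [div_mul_eq_mul_div, le_div_iff₀ hcmin]
  linarith

theorem tendsto_sub_resolvent_zero {M : ℕ → X →ₗ[ℝ] X} {ν ε c : ℕ → ℝ} {z p w : ℕ → X} {s : X}
    {L : ℝ} (hM : ∀ k, (M k).IsPositive) (hν0 : ∀ k, 0 ≤ ν k) (hν : Tendsto ν atTop (𝓝 0))
    (hε : Tendsto ε atTop (𝓝 0)) (hMdec : ∀ k x, ⟪x, M (k + 1) x⟫ ≤ (1 + ν k) * ⟪x, M k x⟫)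
    (hlmin : 0 < lmin) (hlb : ∀ k x, lmin * ‖x‖ ^ 2 ≤ ⟪x, M k x⟫)
    (hres : ∀ k, M k (z k) = M k (p k) + c k • w k) (hc : ∀ k, 0 ≤ c k)
    (hw : ∀ k, 0 ≤ ⟪w k, p k - s⟫)
    (herr : ∀ k, √⟪z (k + 1) - p k, M k (z (k + 1) - p k)⟫ ≤ ε k)
    (ha : Tendsto (fun k => √⟪z k - s, M k (z k - s)⟫) atTop (𝓝 L)) :
    Tendsto (fun k => z k - p k) atTop (𝓝 0) := by
  have hb : Tendsto (fun k => √⟪p k - s, M k (p k - s)⟫) atTop (𝓝 L) :=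
    tendsto_of_le_of_le_one_add_mul ha hν0 hν hε
      (fun k => (hM k).sqrt_inner_resolvent_le (hres k) (hc k) (hw k))
      (fun k => (hM k).sqrt_inner_sub_le_one_add_mul (hν0 k) (hMdec k) (herr k))
  have hq : Tendsto (fun k => ⟪z k - p k, M k (z k - p k)⟫) atTop (𝓝 0) := by
    refine squeeze_zero
      (g := fun k => √⟪z k - s, M k (z k - s)⟫ ^ 2 - √⟪p k - s, M k (p k - s)⟫ ^ 2)
      (fun k => (hM k).inner_nonneg_right _) (fun k => ?_)
      (by simpa using (ha.pow 2).sub (hb.pow 2))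
    rw [Real.sq_sqrt ((hM k).inner_nonneg_right _), Real.sq_sqrt ((hM k).inner_nonneg_right _)]
    linarith [(hM k).isSymmetric.inner_resolvent_add_le (hres k) (hc k) (hw k)]
  exact tendsto_zero_of_sqrt_inner hlmin hlb (by simpa using hq.sqrt)

theorem tendsto_of_tendsto_sqrt_inner_of_subseq {M : ℕ → X →ₗ[ℝ] X} (hlmin : 0 < lmin)
    (hlb : ∀ k x, lmin * ‖x‖ ^ 2 ≤ ⟪x, M k x⟫) (hub : ∀ k x, ⟪x, M k x⟫ ≤ Λ * ‖x‖ ^ 2)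
    {z : ℕ → X} {x : X} {L : ℝ} (ha : Tendsto (fun k => √⟪z k - x, M k (z k - x)⟫) atTop (𝓝 L))
    {φ : ℕ → ℕ} (hφ : StrictMono φ) (hzφ : Tendsto (z ∘ φ) atTop (𝓝 x)) :
    Tendsto z atTop (𝓝 x) := by
  have hL : L = 0 := tendsto_nhds_unique (ha.comp hφ.tendsto_atTop)
    (tendsto_sqrt_inner_zero (fun k => hub (φ k)) (tendsto_sub_nhds_zero_iff.2 hzφ))
  exact tendsto_sub_nhds_zero_iff.1 (tendsto_zero_of_sqrt_inner hlmin hlb (hL ▸ ha))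

end InnerProductSpace

/-- Global convergence of the preconditioned proximal point algorithm under
the summable-error criterion (A). -/
theorem stmt_3
    {X : Type*} [NormedAddCommGroup X] [InnerProductSpace ℝ X] [FiniteDimensional ℝ X]
    (T : X → Set X)
    (hmono : ∀ x y u v, u ∈ T x → v ∈ T y → 0 ≤ ⟪u - v, x - y⟫)
    (hmax : ∀ S : X → Set X,
      (∀ x y u v, u ∈ S x → v ∈ S y → 0 ≤ ⟪u - v, x - y⟫) →
      (∀ x, T x ⊆ S x) → S = T)
    (Ω : Set X) (hΩ : Ω = {z | (0 : X) ∈ T z}) (hΩne : Ω.Nonempty)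
    -- `c_k` bounded away from zero
    (c : ℕ → ℝ) (cmin : ℝ) (hcmin : 0 < cmin) (hc : ∀ k, cmin ≤ c k)
    -- self-adjoint positive definite preconditioners
    (M : ℕ → X →ₗ[ℝ] X)
    (hMsym : ∀ k (x y : X), ⟪M k x, y⟫ = ⟪x, M k y⟫)
    (ν : ℕ → ℝ) (hν0 : ∀ k, 0 ≤ ν k) (hνsum : Summable ν)
    -- `(1 + ν_k) M_k ⪰ M_{k+1}`
    (hMdec : ∀ k (x : X), ⟪x, M (k + 1) x⟫ ≤ (1 + ν k) * ⟪x, M k x⟫)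
    -- `M_k ⪰ λ_min I`
    (lmin : ℝ) (hlmin : 0 < lmin)
    (hMlb : ∀ k (x : X), lmin * ‖x‖ ^ 2 ≤ ⟪x, M k x⟫)
    -- `limsup λ_max(M_k) < ∞`, i.e. a uniform upper bound
    (Λ : ℝ) (hMub : ∀ k (x : X), ⟪x, M k x⟫ ≤ Λ * ‖x‖ ^ 2)
    -- summable errors
    (ε : ℕ → ℝ) (hε0 : ∀ k, 0 ≤ ε k) (hεsum : Summable ε)
    -- weighted norm and distance
    (normM : (X →ₗ[ℝ] X) → X → ℝ)
    (hnormM : ∀ (B : X →ₗ[ℝ] X) (x : X), normM B x = Real.sqrt ⟪x, B x⟫)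
    (distM : (X →ₗ[ℝ] X) → X → Set X → ℝ)
    (hdistM : ∀ (B : X →ₗ[ℝ] X) (x : X) (S : Set X),
      distM B x S = sInf ((fun w => normM B (x - w)) '' S))
    -- the iterates: `‖z^{k+1} - (M_k + c_k T)⁻¹ M_k z^k‖_{M_k} ≤ ε_k`
    (z : ℕ → X)
    (hz : ∀ k, ∃ p : X, (∃ w ∈ T p, M k (z k) = M k p + c k • w) ∧
      normM (M k) (z (k + 1) - p) ≤ ε k) :
    Bornology.IsBounded (Set.range z) ∧
    (∀ k, distM (M (k + 1)) (z (k + 1)) Ω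
      ≤ (1 + ν k) * distM (M k) (z k) Ω + (1 + ν k) * ε k) ∧
    ∃ zinf : X, Filter.Tendsto z Filter.atTop (nhds zinf) ∧ (0 : X) ∈ T zinf := by
  subst hΩ
  obtain ⟨s₀, hs₀⟩ := hΩne
  choose p hpw herr using hz
  choose w hwT hres using hpw
  simp only [hnormM] at herr
  have hM : ∀ k, (M k).IsPositive := fun k => (M k).isPositive_iff.2
    ⟨hMsym k, fun x => real_inner_comm x _ ▸ (by positivity : 0 ≤ lmin * ‖x‖ ^ 2).trans (hMlb k x)⟩
  have hc0 : ∀ k, 0 ≤ c k := fun k => hcmin.le.trans (hc k)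
  have hwΩ : ∀ s, (0 : X) ∈ T s → ∀ k, 0 ≤ ⟪w k, p k - s⟫ := fun s hs k => by
    simpa using hmono _ _ _ _ (hwT k) hs
  have hfejer : ∀ s, (0 : X) ∈ T s → ∀ k, √⟪z (k + 1) - s, M (k + 1) (z (k + 1) - s)⟫
      ≤ (1 + ν k) * (√⟪z k - s, M k (z k - s)⟫ + ε k) := fun s hs k =>
    (hM k).sqrt_inner_step_le (hν0 k) (hMdec k) (hres k) (hc0 k) (hwΩ s hs k) (herr k)
  have hconv : ∀ s, (0 : X) ∈ T s → ∃ L, Tendsto (fun k => √⟪z k - s, M k (z k - s)⟫) atTop (𝓝 L) :=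
    fun s hs => exists_tendsto_of_le_one_add_mul (fun _ => Real.sqrt_nonneg _) hν0 hε0 hνsum
      hεsum (hfejer s hs)
  obtain ⟨L, hL⟩ := hconv s₀ hs₀
  have hbdd := isBounded_range_of_tendsto_sqrt_inner hlmin hMlb hL
  have hzp := tendsto_sub_resolvent_zero hM hν0 hνsum.tendsto_atTop_zero hεsum.tendsto_atTop_zero
    hMdec hlmin hMlb hres hc0 (hwΩ s₀ hs₀) herr hL
  have hw := tendsto_resolvent_residual_zero hM hMub hcmin hc hres hzp
  obtain ⟨zinf, -, φ, hφ, hzφ⟩ := tendsto_subseq_of_bounded hbdd (mem_range_self (f := z))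
  have hpφ : Tendsto (fun k => p (φ k)) atTop (𝓝 zinf) := by
    simpa using hzφ.sub (hzp.comp hφ.tendsto_atTop)
  have hzinf : (0 : X) ∈ T zinf := mem_of_tendsto_of_maximal_monotone hmono hmax hpφ
    (hw.comp hφ.tendsto_atTop) fun k => hwT (φ k)
  refine ⟨hbdd, fun k => ?_, zinf, ?_, hzinf⟩
  · simp only [hdistM, hnormM]
    exact csInf_image_le_mul_add ⟨s₀, hs₀⟩ ⟨0, by rintro _ ⟨s, -, rfl⟩; exact Real.sqrt_nonneg _⟩
      (by linarith [hν0 k]) fun s hs => (hfejer s hs k).trans_eq (mul_add _ _ _)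
  · obtain ⟨L', hL'⟩ := hconv zinf hzinf
    exact tendsto_of_tendsto_sqrt_inner_of_subseq hlmin hMlb hMub hL' hφ hzφ
end

section
/- Let $\mathcal{T}$ be maximal monotone with $\mathcal{T}^{-1}(0) \neq \emptyset$ satisfying an error bound with modulus $\kappa$ on a set containing the relevant iterates, let $\mathcal{M}$ be self-adjoint positive definite and $c > 0$, and let $\mathcal{P} = (\mathcal{M} + c\mathcal{T})^{-1}\mathcal{M}$. Then for any $z$ with $\mathrm{dist}(\mathcal{P}(z), \mathcal{T}^{-1}(0))$ within the error-bound region, $\mathrm{dist}_{\mathcal{M}}(\mathcal{P}(z), \mathcal{T}^{-1}(0)) \le \frac{\kappa\lambda_{\max}(\mathcal{M})}{\sqrt{c^2 + \kappa^2\lambda_{\max}^2(\mathcal{M})}}\,\mathrm{dist}_{\mathcal{M}}(z, \mathcal{T}^{-1}(0))$. -/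
open scoped RealInnerProductSpace

set_option maxHeartbeats 1000000 in
/-- One-step contraction estimate for the preconditioned resolvent
`P = (M + cT)⁻¹M` under the error bound with modulus `κ`. -/
theorem stmt_5
    {X : Type*} [NormedAddCommGroup X] [InnerProductSpace ℝ X] [FiniteDimensional ℝ X]
    (T : X → Set X)
    (hmono : ∀ x y u v, u ∈ T x → v ∈ T y → 0 ≤ ⟪u - v, x - y⟫)
    (hmax : ∀ S : X → Set X,
      (∀ x y u v, u ∈ S x → v ∈ S y → 0 ≤ ⟪u - v, x - y⟫) →
      (∀ x, T x ⊆ S x) → S = T)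
    (Ω : Set X) (hΩ : Ω = {z | (0 : X) ∈ T z}) (hΩne : Ω.Nonempty)
    (M : X →ₗ[ℝ] X)
    (hMsym : ∀ x y : X, ⟪M x, y⟫ = ⟪x, M y⟫)
    (hMpos : ∀ x : X, x ≠ 0 → 0 < ⟪x, M x⟫)
    -- `λ_max(M)`
    (lam : ℝ) (hlam : IsGreatest {t : ℝ | ∃ x : X, ‖x‖ = 1 ∧ ⟪x, M x⟫ = t} lam)
    (c : ℝ) (hc : 0 < c)
    -- error bound with modulus κ on the region `{x : dist(x, Ω) ≤ r}`
    (κ r : ℝ) (hκ : 0 < κ) (hr : 0 < r)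
    (hEB : ∀ x w, w ∈ T x → Metric.infDist x Ω ≤ r → Metric.infDist x Ω ≤ κ * ‖w‖)
    -- `P = (M + cT)⁻¹ M`
    (P : X → X)
    (hP : ∀ z, c⁻¹ • (M (z - P z)) ∈ T (P z))
    -- weighted norm and distance
    (normM : (X →ₗ[ℝ] X) → X → ℝ)
    (hnormM : ∀ (B : X →ₗ[ℝ] X) (x : X), normM B x = Real.sqrt ⟪x, B x⟫)
    (distM : (X →ₗ[ℝ] X) → X → Set X → ℝ)
    (hdistM : ∀ (B : X →ₗ[ℝ] X) (x : X) (S : Set X),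
      distM B x S = sInf ((fun w => normM B (x - w)) '' S))
    -- `P z` lies within the error-bound region
    (z : X) (hz : Metric.infDist (P z) Ω ≤ r) :
    distM M (P z) Ω ≤ (κ * lam / Real.sqrt (c ^ 2 + κ ^ 2 * lam ^ 2)) * distM M z Ω := by
  have hq : ∀ x : X, 0 ≤ ⟪x, M x⟫ := by
    intro x
    rcases eq_or_ne x 0 with h | h
    · simp [h]
    · exact (hMpos x h).le
  have hsym' : ∀ a b : X, ⟪b, M a⟫ = ⟪a, M b⟫ := fun a b => by
    rw [← hMsym b a, real_inner_comm]
  obtain ⟨x₀, hx₀, hx₀lam⟩ := hlam.1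
  have hx₀ne : x₀ ≠ 0 := by
    intro h; rw [h] at hx₀; simp at hx₀
  have hlam_pos : 0 < lam := hx₀lam ▸ hMpos x₀ hx₀ne
  -- Rayleigh bound
  have hray : ∀ x : X, ⟪x, M x⟫ ≤ lam * ‖x‖ ^ 2 := by
    intro x
    rcases eq_or_ne x 0 with h | h
    · simp [h]
    · have hxn : (0:ℝ) < ‖x‖ := norm_pos_iff.mpr h
      have hmem : ⟪‖x‖⁻¹ • x, M (‖x‖⁻¹ • x)⟫ ∈ {t : ℝ | ∃ x : X, ‖x‖ = 1 ∧ ⟪x, M x⟫ = t} :=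
        ⟨‖x‖⁻¹ • x, by simp [norm_smul, inv_mul_cancel₀ hxn.ne'], rfl⟩
      have hle := hlam.2 hmem
      rw [map_smul, inner_smul_left, inner_smul_right] at hle
      simp only [RCLike.conj_to_real] at hle
      have h4 : (0:ℝ) < ‖x‖ ^ 2 := by positivity
      have h5 : ‖x‖⁻¹ * (‖x‖⁻¹ * ⟪x, M x⟫) * ‖x‖ ^ 2 ≤ lam * ‖x‖ ^ 2 := by
        nlinarith [hle, h4]
      have h6 : ‖x‖⁻¹ * (‖x‖⁻¹ * ⟪x, M x⟫) * ‖x‖ ^ 2 = ⟪x, M x⟫ := by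
        calc ‖x‖⁻¹ * (‖x‖⁻¹ * ⟪x, M x⟫) * ‖x‖ ^ 2
            = (‖x‖⁻¹ * ‖x‖) * ((‖x‖⁻¹ * ‖x‖) * ⟪x, M x⟫) := by ring
          _ = ⟪x, M x⟫ := by rw [inv_mul_cancel₀ hxn.ne']; ring
      linarith [h6 ▸ h5]
  -- Cauchy–Schwarz for the bilinear form ⟪·, M ·⟫
  have hCS : ∀ a b : X, ⟪a, M b⟫ ^ 2 ≤ ⟪a, M a⟫ * ⟪b, M b⟫ := by
    intro a b
    have key : ∀ t : ℝ, 0 ≤ ⟪b, M b⟫ * (t * t) + (-(2 * ⟪a, M b⟫)) * t + ⟪a, M a⟫ := by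
      intro t
      have h0 := hq (a - t • b)
      have expand : ⟪a - t • b, M (a - t • b)⟫
          = ⟪b, M b⟫ * (t * t) + (-(2 * ⟪a, M b⟫)) * t + ⟪a, M a⟫ := by
        rw [map_sub, map_smul, inner_sub_left, inner_sub_right, inner_sub_right,
          inner_smul_left, inner_smul_left, inner_smul_right, inner_smul_right,
          hsym' a b]
        simp only [RCLike.conj_to_real]
        ring
      linarith [expand ▸ h0]
    have hd := discrim_le_zero key
    rw [discrim] at hd
    nlinarith [hd]
  -- ‖M u‖ ≤ √lam * ‖u‖_M
  have hMnorm : ∀ u : X, ‖M u‖ ≤ Real.sqrt lam * Real.sqrt ⟪u, M u⟫ := by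
    intro u
    have h1 : ‖M u‖ ^ 2 = ⟪u, M (M u)⟫ := by
      rw [← hMsym u (M u), real_inner_self_eq_norm_sq]
    have h2 := hCS u (M u)
    have h3 := hray (M u)
    rcases eq_or_lt_of_le (norm_nonneg (M u)) with h | h
    · rw [← h]; positivity
    · have h4 : ‖M u‖ ^ 2 ≤ lam * ⟪u, M u⟫ := by
        nlinarith [h1, h2, h3, hq u, mul_le_mul_of_nonneg_left h3 (hq u), mul_pos h h]
      calc ‖M u‖ = Real.sqrt (‖M u‖ ^ 2) := (Real.sqrt_sq (norm_nonneg _)).symm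
        _ ≤ Real.sqrt (lam * ⟪u, M u⟫) := Real.sqrt_le_sqrt h4
        _ = Real.sqrt lam * Real.sqrt ⟪u, M u⟫ := Real.sqrt_mul hlam_pos.le _
  -- ‖u‖_M ≤ √lam * ‖u‖
  have hnormM_le : ∀ u : X, Real.sqrt ⟪u, M u⟫ ≤ Real.sqrt lam * ‖u‖ := by
    intro u
    calc Real.sqrt ⟪u, M u⟫ ≤ Real.sqrt (lam * ‖u‖ ^ 2) := Real.sqrt_le_sqrt (hray u)
      _ = Real.sqrt lam * ‖u‖ := by
          rw [Real.sqrt_mul hlam_pos.le, Real.sqrt_sq (norm_nonneg _)]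
  -- facts about distM
  have himg_nonneg : ∀ (x : X) (t : ℝ), t ∈ (fun w => normM M (x - w)) '' Ω → 0 ≤ t := by
    rintro x t ⟨w, _, rfl⟩
    simp only [hnormM]; exact Real.sqrt_nonneg _
  have hbdd : ∀ x : X, BddBelow ((fun w => normM M (x - w)) '' Ω) :=
    fun x => ⟨0, fun t ht => himg_nonneg x t ht⟩
  have hD_nonneg : ∀ x : X, 0 ≤ distM M x Ω := by
    intro x
    rw [hdistM]
    exact Real.sInf_nonneg (himg_nonneg x)
  have hD_le : ∀ (x w : X), w ∈ Ω → distM M x Ω ≤ Real.sqrt ⟪x - w, M (x - w)⟫ := by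
    intro x w hw
    rw [hdistM, ← hnormM]
    exact csInf_le (hbdd x) ⟨w, hw, rfl⟩
  set Dv := distM M (P z) Ω with hDv
  set Av := distM M z Ω with hAv
  set sv := Real.sqrt ⟪z - P z, M (z - P z)⟫ with hsv
  have hDnn : 0 ≤ Dv := hD_nonneg (P z)
  have hAnn : 0 ≤ Av := hD_nonneg z
  have hsv_nonneg : 0 ≤ sv := Real.sqrt_nonneg _
  have hs2 : sv ^ 2 = ⟪z - P z, M (z - P z)⟫ := Real.sq_sqrt (hq _)
  -- Fejér inequality pointwise
  have hfejer : ∀ w ∈ Ω, ⟪P z - w, M (P z - w)⟫ + ⟪z - P z, M (z - P z)⟫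
      ≤ ⟪z - w, M (z - w)⟫ := by
    intro w hw
    have h0w : (0:X) ∈ T w := by rw [hΩ] at hw; exact hw
    have hm := hmono (P z) w _ _ (hP z) h0w
    rw [sub_zero, inner_smul_left] at hm
    simp only [RCLike.conj_to_real] at hm
    have hcross : 0 ≤ ⟪M (z - P z), P z - w⟫ := by
      nlinarith [hm, inv_pos.mpr hc]
    have hcross' : 0 ≤ ⟪z - P z, M (P z - w)⟫ := by
      rwa [← hMsym (z - P z) (P z - w)]
    have h1 : z - w = (z - P z) + (P z - w) := by abel
    have hexp : ⟪z - w, M (z - w)⟫ = ⟪z - P z, M (z - P z)⟫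
        + 2 * ⟪z - P z, M (P z - w)⟫ + ⟪P z - w, M (P z - w)⟫ := by
      rw [h1, map_add, inner_add_left, inner_add_right, inner_add_right,
        hsym' (z - P z) (P z - w)]
      ring
    linarith
  -- Fejér for the weighted distances
  have hkey1 : Dv ^ 2 + sv ^ 2 ≤ Av ^ 2 := by
    have hL : Real.sqrt (Dv ^ 2 + sv ^ 2) ≤ Av := by
      rw [hAv, hdistM]
      apply le_csInf (hΩne.image _)
      rintro t ⟨w, hw, rfl⟩
      simp only [hnormM]
      have hDle := hD_le (P z) w hw
      have hPw2 : (Real.sqrt ⟪P z - w, M (P z - w)⟫) ^ 2 = ⟪P z - w, M (P z - w)⟫ :=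
        Real.sq_sqrt (hq _)
      have h2 : Dv ^ 2 + sv ^ 2 ≤ ⟪z - w, M (z - w)⟫ := by
        have := hfejer w hw
        nlinarith [hDle, hDnn, Real.sqrt_nonneg ⟪P z - w, M (P z - w)⟫, hs2]
      exact Real.sqrt_le_sqrt h2
    have hL2 : (Real.sqrt (Dv ^ 2 + sv ^ 2)) ^ 2 = Dv ^ 2 + sv ^ 2 :=
      Real.sq_sqrt (by positivity)
    nlinarith [hL, Real.sqrt_nonneg (Dv ^ 2 + sv ^ 2), hL2]
  -- error-bound chain
  have hsl : (0:ℝ) < Real.sqrt lam := Real.sqrt_pos.mpr hlam_pos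
  have hsq : Real.sqrt lam * Real.sqrt lam = lam := Real.mul_self_sqrt hlam_pos.le
  have hDd : Dv / Real.sqrt lam ≤ Metric.infDist (P z) Ω := by
    by_contra hlt
    push_neg at hlt
    obtain ⟨w, hw, hdw⟩ := (Metric.infDist_lt_iff hΩne).mp hlt
    have h1 := hD_le (P z) w hw
    have h2 := hnormM_le (P z - w)
    rw [dist_eq_norm] at hdw
    have h3 : Dv ≤ Real.sqrt lam * ‖P z - w‖ := h1.trans h2
    have h4 : Real.sqrt lam * ‖P z - w‖ < Real.sqrt lam * (Dv / Real.sqrt lam) :=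
      (mul_lt_mul_iff_right₀ hsl).mpr hdw
    rw [mul_div_cancel₀ _ hsl.ne'] at h4
    linarith
  have hEB2 : Metric.infDist (P z) Ω ≤ κ * (c⁻¹ * ‖M (z - P z)‖) := by
    have := hEB (P z) _ (hP z) hz
    rwa [norm_smul, Real.norm_eq_abs, abs_of_pos (inv_pos.mpr hc)] at this
  have hMn : ‖M (z - P z)‖ ≤ Real.sqrt lam * sv := hMnorm (z - P z)
  have hkey2 : c * Dv ≤ κ * lam * sv := by
    have t1 : Dv ≤ Real.sqrt lam * Metric.infDist (P z) Ω := by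
      rw [div_le_iff₀ hsl] at hDd
      linarith [hDd, mul_comm (Metric.infDist (P z) Ω) (Real.sqrt lam)]
    have t2 : Metric.infDist (P z) Ω ≤ κ * (c⁻¹ * (Real.sqrt lam * sv)) := by
      refine hEB2.trans ?_
      gcongr
    have t3 : Dv ≤ Real.sqrt lam * (κ * (c⁻¹ * (Real.sqrt lam * sv))) :=
      t1.trans (by gcongr)
    have t4 : Real.sqrt lam * (κ * (c⁻¹ * (Real.sqrt lam * sv))) = κ * lam * sv * c⁻¹ := by
      rw [show Real.sqrt lam * (κ * (c⁻¹ * (Real.sqrt lam * sv)))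
        = κ * (Real.sqrt lam * Real.sqrt lam) * sv * c⁻¹ by ring, hsq]
    rw [t4] at t3
    have t5 : c * Dv ≤ c * (κ * lam * sv * c⁻¹) := by
      exact mul_le_mul_of_nonneg_left t3 hc.le
    rwa [show c * (κ * lam * sv * c⁻¹) = κ * lam * sv * (c * c⁻¹) by ring,
      mul_inv_cancel₀ hc.ne', mul_one] at t5
  -- final algebra
  have hE : (0:ℝ) < c ^ 2 + κ ^ 2 * lam ^ 2 := by positivity
  have ha : c ^ 2 * Dv ^ 2 ≤ κ ^ 2 * lam ^ 2 * sv ^ 2 := by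
    nlinarith [hkey2, mul_nonneg hc.le hDnn,
      mul_nonneg (mul_nonneg hκ.le hlam_pos.le) hsv_nonneg]
  have hmul : (κ * lam) ^ 2 * (Dv ^ 2 + sv ^ 2) ≤ (κ * lam) ^ 2 * Av ^ 2 :=
    mul_le_mul_of_nonneg_left hkey1 (sq_nonneg (κ * lam))
  have hb : (c ^ 2 + κ ^ 2 * lam ^ 2) * Dv ^ 2 ≤ (κ * lam) ^ 2 * Av ^ 2 := by
    nlinarith [ha, hmul]
  rw [div_mul_eq_mul_div, le_div_iff₀ (Real.sqrt_pos.mpr hE)]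
  have hrn : 0 ≤ κ * lam * Av := by positivity
  have hsqle : (Dv * Real.sqrt (c ^ 2 + κ ^ 2 * lam ^ 2)) ^ 2 ≤ (κ * lam * Av) ^ 2 := by
    rw [mul_pow, Real.sq_sqrt hE.le]
    nlinarith [hb]
  calc Dv * Real.sqrt (c ^ 2 + κ ^ 2 * lam ^ 2)
      = Real.sqrt ((Dv * Real.sqrt (c ^ 2 + κ ^ 2 * lam ^ 2)) ^ 2) :=
        (Real.sqrt_sq (by positivity)).symm
    _ ≤ Real.sqrt ((κ * lam * Av) ^ 2) := Real.sqrt_le_sqrt hsqle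
    _ = κ * lam * Av := Real.sqrt_sq hrn
end

section
/- Let $A_J \in \mathbb{R}^{m\times p}$, $\rho > 0$, $\tau, \sigma > 0$ with $\rho = \tau\sigma^{-2}$, and let $H = \sigma(A_JA_J^* + \rho I_m)$. Suppose $Gv = A_J^*g - \xi$ where $G = \rho I_p + A_J^*A_J$ and $\xi \in \mathbb{R}^p$ is the residual vector. Define $\widehat{\Delta y} = \tau^{-1}\sigma(g - A_Jv)$. Then the residual of the system $H\Delta y = g$ at $\widehat{\Delta y}$ satisfies $g - H\widehat{\Delta y} = -\rho^{-1}A_J\xi$. -/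
/-- Residual identity for the SMW-based solve. If `Gv = A_Jᵀg - ξ` with
`G = ρI + A_JᵀA_J`, `H = σ(A_JA_Jᵀ + ρI)`, `ρ = τσ⁻²`, and
`Δy = τ⁻¹σ(g - A_Jv)`, then `g - HΔy = -ρ⁻¹ A_J ξ`. -/
theorem stmt_9
    {m p : ℕ}
    (AJ : Matrix (Fin m) (Fin p) ℝ)
    (τ σ ρ : ℝ) (hτ : 0 < τ) (hσ : 0 < σ) (hρ : ρ = τ * (σ ^ 2)⁻¹)
    (H : Matrix (Fin m) (Fin m) ℝ) (hH : H = σ • (AJ * AJ.transpose + ρ • 1))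
    (G : Matrix (Fin p) (Fin p) ℝ) (hG : G = ρ • 1 + AJ.transpose * AJ)
    (g : Fin m → ℝ) (v ξ : Fin p → ℝ)
    (hv : G.mulVec v = AJ.transpose.mulVec g - ξ)
    (Δy : Fin m → ℝ) (hΔy : Δy = (τ⁻¹ * σ) • (g - AJ.mulVec v)) :
    g - H.mulVec Δy = (-ρ⁻¹) • AJ.mulVec ξ := by
  have hρ0 : ρ > 0 := by
    rw [hρ]; positivity
  have hξ : ξ = AJ.transpose.mulVec g - G.mulVec v := by
    rw [hv]; abel
  have hc : σ * (τ⁻¹ * σ) = ρ⁻¹ := by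
    rw [hρ]; field_simp
  subst hH hG hΔy hξ
  simp only [Matrix.mulVec_smul, Matrix.smul_mulVec, Matrix.add_mulVec,
    Matrix.mulVec_sub, Matrix.smul_mulVec, Matrix.one_mulVec, smul_smul,
    Matrix.mulVec_add, hc, ← Matrix.mulVec_mulVec, smul_sub, smul_add]
  subst hρ
  match_scalars <;> (field_simp; try ring) <;> tauto
end

section
/- Let $K \subseteq \mathbb{R}^n$ be a nonempty closed convex set, $A \in \mathbb{R}^{m\times n}$, $b, c$ given, $\sigma_k > 0$, and $x^k \in \mathbb{R}^n$. Suppose $\bar{y}^{k+1} \in \arg\min_y L_{\sigma_k}(y; x^k)$ exactly. Then $\bar{x}^{k+1} := \Pi_K(x^k - \sigma_k(c - A^*\bar{y}^{k+1}))$ is the unique optimal solution of the proximal problem $\min\{c^Tx + \frac{1}{2\sigma_k}\|x - x^k\|^2 : Ax = b,\ x \in K\}$, provided the feasible set $\{x \in K : Ax = b\}$ is nonempty. -/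
open scoped RealInnerProductSpace

variable {E : Type*} [NormedAddCommGroup E] [InnerProductSpace ℝ E]

lemma aux_varineq {K : Set E} (hKconv : Convex ℝ K) (proj : E → E)
    (hproj : ∀ z, proj z ∈ K ∧ ∀ w ∈ K, ‖z - proj z‖ ≤ ‖z - w‖) (z : E) :
    ∀ w ∈ K, ⟪z - proj z, w - proj z⟫ ≤ 0 := by
  haveI : Nonempty K := ⟨⟨proj z, (hproj z).1⟩⟩
  have h1 : ‖z - proj z‖ = ⨅ w : K, ‖z - (w : E)‖ := by
    refine le_antisymm (le_ciInf fun w => (hproj z).2 w w.2) ?_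
    exact ciInf_le ⟨0, fun _ ⟨_, h⟩ => h ▸ norm_nonneg _⟩ (⟨proj z, (hproj z).1⟩ : K)
  exact (norm_eq_iInf_iff_real_inner_le_zero hKconv (hproj z).1).mp h1

lemma aux_nonexp {K : Set E} (hKconv : Convex ℝ K) (proj : E → E)
    (hproj : ∀ z, proj z ∈ K ∧ ∀ w ∈ K, ‖z - proj z‖ ≤ ‖z - w‖) (z1 z2 : E) :
    ‖proj z1 - proj z2‖ ≤ ‖z1 - z2‖ := by
  have h1 := aux_varineq hKconv proj hproj z1 (proj z2) (hproj z2).1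
  have h2 := aux_varineq hKconv proj hproj z2 (proj z1) (hproj z1).1
  have e1 : ⟪z1 - proj z1, proj z2 - proj z1⟫ = -⟪z1 - proj z1, proj z1 - proj z2⟫ := by
    rw [← inner_neg_right]; congr 1; abel
  rw [e1] at h1
  have h1' : 0 ≤ ⟪z1 - proj z1, proj z1 - proj z2⟫ := by linarith
  have edec : ⟪z1 - z2, proj z1 - proj z2⟫
      = ⟪z1 - proj z1, proj z1 - proj z2⟫ - ⟪z2 - proj z2, proj z1 - proj z2⟫
        + ⟪proj z1 - proj z2, proj z1 - proj z2⟫ := by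
    rw [← inner_sub_left, ← inner_add_left]; congr 1; abel
  have key : ‖proj z1 - proj z2‖ ^ 2 ≤ ⟪z1 - z2, proj z1 - proj z2⟫ := by
    rw [edec, real_inner_self_eq_norm_sq]; linarith
  have hcs := real_inner_le_norm (z1 - z2) (proj z1 - proj z2)
  nlinarith [norm_nonneg (proj z1 - proj z2), norm_nonneg (z1 - z2)]

lemma aux_min {σ : ℝ} (hσ : 0 < σ) (v p u xk : E)
    (h : ⟪(xk - σ • v) - p, u - p⟫ ≤ 0) :
    ⟪v, p⟫ + (1/(2*σ)) * ‖p - xk‖ ^ 2 + (1/(2*σ)) * ‖u - p‖ ^ 2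
      ≤ ⟪v, u⟫ + (1/(2*σ)) * ‖u - xk‖ ^ 2 := by
  have hid : ‖u - xk‖ ^ 2 = ‖u - p‖ ^ 2 + 2 * ⟪u - p, p - xk⟫ + ‖p - xk‖ ^ 2 := by
    have := norm_add_sq_real (u - p) (p - xk)
    rwa [sub_add_sub_cancel] at this
  have h' : ⟪xk - p, u - p⟫ - σ * ⟪v, u - p⟫ ≤ 0 := by
    have e : (xk - σ • v) - p = (xk - p) - σ • v := by abel
    rw [e, inner_sub_left, real_inner_smul_left] at h
    linarith
  have e3 : ⟪v, u - p⟫ = ⟪v, u⟫ - ⟪v, p⟫ := inner_sub_right v u p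
  have e4 : ⟪u - p, p - xk⟫ = -⟪xk - p, u - p⟫ := by
    rw [real_inner_comm, ← inner_neg_left]; congr 1; abel
  have H : 2*σ*⟪v, p⟫ + ‖p - xk‖ ^ 2 + ‖u - p‖ ^ 2 ≤ 2*σ*⟪v, u⟫ + ‖u - xk‖ ^ 2 := by
    rw [hid]; nlinarith [h', e3, e4]
  have h2σ : (0:ℝ) < 2*σ := by linarith
  have e5 : (⟪v, u⟫ + (1/(2*σ)) * ‖u - xk‖ ^ 2)
      - (⟪v, p⟫ + (1/(2*σ)) * ‖p - xk‖ ^ 2 + (1/(2*σ)) * ‖u - p‖ ^ 2)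
      = ((2*σ*⟪v, u⟫ + ‖u - xk‖ ^ 2) - (2*σ*⟪v, p⟫ + ‖p - xk‖ ^ 2 + ‖u - p‖ ^ 2))
        * (2*σ)⁻¹ := by
    field_simp
  linarith [mul_nonneg (by linarith : (0:ℝ) ≤ (2*σ*⟪v, u⟫ + ‖u - xk‖ ^ 2) - (2*σ*⟪v, p⟫ + ‖p - xk‖ ^ 2 + ‖u - p‖ ^ 2)) (inv_nonneg.2 h2σ.le), e5]

set_option maxHeartbeats 1000000 in
/-- If `ȳ` exactly minimizes the augmented Lagrangian `L_{σ_k}(·; x^k)`,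
then `x̄ = Π_K(x^k - σ_k(c - A*ȳ))` is the unique optimal solution of the proximal
problem `min { cᵀx + ‖x - x^k‖²/(2σ_k) : Ax = b, x ∈ K }`. -/
theorem stmt_12
    {n m : ℕ}
    (K : Set (EuclideanSpace ℝ (Fin n)))
    (hKne : K.Nonempty) (hKcl : IsClosed K) (hKconv : Convex ℝ K)
    (A : EuclideanSpace ℝ (Fin n) →ₗ[ℝ] EuclideanSpace ℝ (Fin m))
    (b : EuclideanSpace ℝ (Fin m)) (c : EuclideanSpace ℝ (Fin n))
    (σk : ℝ) (hσ : 0 < σk)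
    (xk : EuclideanSpace ℝ (Fin n))
    -- Euclidean projection onto K
    (proj : EuclideanSpace ℝ (Fin n) → EuclideanSpace ℝ (Fin n))
    (hproj : ∀ z, proj z ∈ K ∧ ∀ w ∈ K, ‖z - proj z‖ ≤ ‖z - w‖)
    -- the augmented Lagrangian in closed form
    (L : EuclideanSpace ℝ (Fin m) → ℝ)
    (hL : ∀ y, L y = -⟪b, y⟫ - ⟪proj (xk - σk • (c - A.adjoint y)), c - A.adjoint y⟫
      - (1 / (2 * σk)) * ‖proj (xk - σk • (c - A.adjoint y)) - xk‖ ^ 2)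
    -- nonempty feasible set
    (hfeas : ∃ x ∈ K, A x = b)
    -- `ȳ` minimizes `L` exactly
    (ybar : EuclideanSpace ℝ (Fin m)) (hybar : ∀ y, L ybar ≤ L y)
    (xbar : EuclideanSpace ℝ (Fin n))
    (hxbar : xbar = proj (xk - σk • (c - A.adjoint ybar))) :
    (xbar ∈ K ∧ A xbar = b) ∧
    (∀ x ∈ K, A x = b →
      ⟪c, xbar⟫ + (1 / (2 * σk)) * ‖xbar - xk‖ ^ 2
        ≤ ⟪c, x⟫ + (1 / (2 * σk)) * ‖x - xk‖ ^ 2) ∧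
    (∀ x ∈ K, A x = b →
      (∀ x' ∈ K, A x' = b →
        ⟪c, x⟫ + (1 / (2 * σk)) * ‖x - xk‖ ^ 2
          ≤ ⟪c, x'⟫ + (1 / (2 * σk)) * ‖x' - xk‖ ^ 2) → x = xbar) := by
  set Z : EuclideanSpace ℝ (Fin m) → EuclideanSpace ℝ (Fin n) :=
    fun y => xk - σk • (c - A.adjoint y) with hZ
  have hB : ∀ y, ∀ u ∈ K,
      ⟪c - A.adjoint y, proj (Z y)⟫ + (1/(2*σk)) * ‖proj (Z y) - xk‖ ^ 2
        + (1/(2*σk)) * ‖u - proj (Z y)‖ ^ 2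
      ≤ ⟪c - A.adjoint y, u⟫ + (1/(2*σk)) * ‖u - xk‖ ^ 2 :=
    fun y u hu => aux_min hσ (c - A.adjoint y) (proj (Z y)) u xk
      (aux_varineq hKconv proj hproj (Z y) u hu)
  have hxK : xbar ∈ K := hxbar ▸ (hproj _).1
  have hc1 : (0:ℝ) < 1/(2*σk) := by positivity
  -- Step 1: A xbar = b
  have hAxb : A xbar = b := by
    set d : EuclideanSpace ℝ (Fin m) := b - A xbar with hd
    set Ac : EuclideanSpace ℝ (Fin n) →L[ℝ] EuclideanSpace ℝ (Fin m) :=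
      LinearMap.toContinuousLinearMap A with hAc
    have hdle : ∀ t : ℝ, 0 < t → ⟪d, b - A (proj (Z (ybar + t • d)))⟫ ≤ 0 := by
      intro t ht
      set yt := ybar + t • d with hyt
      set pt := proj (Z yt) with hpt
      have i1 := hB ybar pt (hproj _).1
      rw [← hxbar] at i1
      have i2 := hybar yt
      rw [hL ybar, hL yt] at i2
      rw [← hxbar] at i2
      have hpt' : pt = proj (xk - σk • (c - A.adjoint yt)) := by simp only [hpt, hZ]
      rw [← hpt'] at i2
      have s1 : ⟪xbar, c - A.adjoint ybar⟫ = ⟪c - A.adjoint ybar, xbar⟫ := real_inner_comm _ _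
      have s2 : ⟪pt, c - A.adjoint yt⟫ = ⟪c - A.adjoint yt, pt⟫ := real_inner_comm _ _
      rw [s1, s2] at i2
      -- combine i1 and i2
      have sum : ⟪b, yt⟫ + ⟪c - A.adjoint yt, pt⟫ ≤ ⟪b, ybar⟫ + ⟪c - A.adjoint ybar, pt⟫ := by
        linarith [i1, i2, mul_nonneg hc1.le (sq_nonneg ‖pt - xbar‖)]
      have eb : ⟪b, yt⟫ = ⟪b, ybar⟫ + t * ⟪b, d⟫ := by
        rw [hyt, inner_add_right, real_inner_smul_right]
      have eadj : A.adjoint yt = A.adjoint ybar + t • A.adjoint d := by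
        rw [hyt, map_add, map_smul]
      have ec : ⟪c - A.adjoint ybar, pt⟫ - ⟪c - A.adjoint yt, pt⟫ = t * ⟪d, A pt⟫ := by
        rw [← inner_sub_left, eadj]
        have : c - A.adjoint ybar - (c - (A.adjoint ybar + t • A.adjoint d))
            = t • A.adjoint d := by abel
        rw [this, real_inner_smul_left, LinearMap.adjoint_inner_left]
      have hbd : t * ⟪b, d⟫ = t * ⟪d, b⟫ := by rw [real_inner_comm]
      have ht' : t * ⟪d, b⟫ ≤ t * ⟪d, A pt⟫ := by linarith [sum, eb, ec]
      have := le_of_mul_le_mul_left ht' ht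
      rw [inner_sub_right]
      linarith
    have hnorm : ∀ t : ℝ, 0 < t →
        ‖d‖ ^ 2 ≤ (‖d‖ * ‖Ac‖ * (σk * ‖A.adjoint d‖)) * t := by
      intro t ht
      set pt := proj (Z (ybar + t • d)) with hpt
      have h1 := hdle t ht
      have e1 : ⟪d, d⟫ = ⟪d, b - A pt⟫ + ⟪d, A pt - A xbar⟫ := by
        rw [← inner_add_right]; congr 1; rw [hd]; abel
      have e2 : A pt - A xbar = A (pt - xbar) := (map_sub A pt xbar).symm
      have hcs := real_inner_le_norm d (A (pt - xbar))
      have hA1 : ‖A (pt - xbar)‖ ≤ ‖Ac‖ * ‖pt - xbar‖ := Ac.le_opNorm _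
      have hne : ‖pt - xbar‖ ≤ σk * t * ‖A.adjoint d‖ := by
        have h2 := aux_nonexp hKconv proj hproj (Z (ybar + t • d)) (Z ybar)
        rw [← hxbar] at h2
        have e3 : Z (ybar + t • d) - Z ybar = (σk * t) • A.adjoint d := by
          simp only [hZ, map_add, map_smul]
          module
        rw [e3] at h2
        rw [norm_smul, Real.norm_eq_abs, abs_of_pos (by positivity : (0:ℝ) < σk * t)] at h2
        exact h2
      have hd2 : ‖d‖ ^ 2 = ⟪d, d⟫ := (real_inner_self_eq_norm_sq d).symm
      have hfin : ⟪d, A (pt - xbar)⟫ ≤ ‖d‖ * (‖Ac‖ * (σk * t * ‖A.adjoint d‖)) := by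
        calc ⟪d, A (pt - xbar)⟫ ≤ ‖d‖ * ‖A (pt - xbar)‖ := hcs
          _ ≤ ‖d‖ * (‖Ac‖ * ‖pt - xbar‖) := by
              exact mul_le_mul_of_nonneg_left (by
                calc ‖A (pt - xbar)‖ ≤ ‖Ac‖ * ‖pt - xbar‖ := hA1) (norm_nonneg d)
          _ ≤ ‖d‖ * (‖Ac‖ * (σk * t * ‖A.adjoint d‖)) := by
              apply mul_le_mul_of_nonneg_left _ (norm_nonneg d)
              exact mul_le_mul_of_nonneg_left hne (norm_nonneg Ac)
      rw [hd2, e1, e2]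
      nlinarith [hfin, h1]
    have hdzero : ‖d‖ ^ 2 ≤ 0 := by
      by_contra hcon
      push_neg at hcon
      set M := ‖d‖ * ‖Ac‖ * (σk * ‖A.adjoint d‖) with hM
      have hM0 : 0 ≤ M := by positivity
      have ht : 0 < ‖d‖ ^ 2 / (2 * (M + 1)) := by positivity
      have := hnorm _ ht
      rw [div_eq_mul_inv] at this
      have hMle : M * (‖d‖ ^ 2 * (2 * (M + 1))⁻¹) ≤ (M + 1) * (‖d‖ ^ 2 * (2 * (M + 1))⁻¹) := by
        apply mul_le_mul_of_nonneg_right (by linarith) (by positivity)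
      have heq : (M + 1) * (‖d‖ ^ 2 * (2 * (M + 1))⁻¹) = ‖d‖ ^ 2 / 2 := by
        field_simp
      nlinarith
    have : d = 0 := by
      have : ‖d‖ = 0 := by nlinarith [norm_nonneg d, sq_nonneg ‖d‖]
      exact norm_eq_zero.mp this
    rw [hd] at this
    exact (sub_eq_zero.mp this).symm
  -- Step 2: optimality with strong-convexity gap
  have hopt' : ∀ x ∈ K, A x = b →
      ⟪c, xbar⟫ + (1/(2*σk)) * ‖xbar - xk‖ ^ 2 + (1/(2*σk)) * ‖x - xbar‖ ^ 2
        ≤ ⟪c, x⟫ + (1/(2*σk)) * ‖x - xk‖ ^ 2 := by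
    intro x hx hAx
    have i1 := hB ybar x hx
    rw [← hxbar] at i1
    have e1 : ⟪c - A.adjoint ybar, x⟫ = ⟪c, x⟫ - ⟪ybar, A x⟫ := by
      rw [inner_sub_left, LinearMap.adjoint_inner_left]
    have e2 : ⟪c - A.adjoint ybar, xbar⟫ = ⟪c, xbar⟫ - ⟪ybar, A xbar⟫ := by
      rw [inner_sub_left, LinearMap.adjoint_inner_left]
    rw [hAx] at e1
    rw [hAxb] at e2
    linarith [i1]
  refine ⟨⟨hxK, hAxb⟩, fun x hx hAx => ?_, fun x hx hAx hxopt => ?_⟩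
  · have := hopt' x hx hAx
    have hnn : 0 ≤ (1/(2*σk)) * ‖x - xbar‖ ^ 2 := mul_nonneg hc1.le (sq_nonneg _)
    linarith
  · have h1 := hxopt xbar hxK hAxb
    have h2 := hopt' x hx hAx
    have h4 : (1/(2*σk)) * ‖x - xbar‖ ^ 2 ≤ 0 := by linarith
    have h3 : ‖x - xbar‖ ^ 2 ≤ 0 := by
      by_contra hcon
      push_neg at hcon
      exact absurd h4 (not_le.mpr (mul_pos hc1 hcon))
    have h5 : ‖x - xbar‖ ^ 2 = 0 := le_antisymm h3 (sq_nonneg _)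
    have h6 : ‖x - xbar‖ = 0 := by
      have := sq_eq_zero_iff.mp h5
      exact this
    exact sub_eq_zero.mp (norm_eq_zero.mp h6)
end

section
/- Let $\psi_k(y) = L_{\sigma_k}(y; x^k) + \frac{\tau_k}{2\sigma_k}\|y - y^k\|^2$, let $y^{k+1} \in \mathbb{R}^m$ be arbitrary, and set $x^{k+1} = \Pi_K(x^k - \sigma_k(c - A^*y^{k+1}))$. With $\Lambda_k = \mathrm{Diag}(\tau_kI_m, I_n)$ and $P_k$ the exact proximal map $(\Lambda_k + \sigma_k\mathcal{T}_l)^{-1}\Lambda_k$, it holds that $\|(y^{k+1}, x^{k+1}) - P_k(y^k, x^k)\|_{\Lambda_k} \le \frac{\sigma_k}{\min(\sqrt{\tau_k}, 1)}\|\nabla\psi_k(y^{k+1})\|$. -/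
open scoped RealInnerProductSpace

/-!
Write `Δy = y^{k+1} - ŷ` and `Δx = x^{k+1} - x̂`. The iterate `x^{k+1}` is a projection, so the
residual of the projection is a normal vector to `K` at `x^{k+1}`; the resolvent relation puts
a normal vector at `x̂`. Monotonicity of the normal cone, together with the two affine relations
`A x̂ = (τ/σ)(y^k - ŷ) + b` and `A x^{k+1} = ∇ψ_k(y^{k+1}) + b - (τ/σ)(y^{k+1} - y^k)`, gives
`τ‖Δy‖² + ‖Δx‖² ≤ σ ⟪Δy, ∇ψ_k(y^{k+1})⟫`. Cauchy–Schwarz and `min(√τ, 1) ‖Δy‖ ≤ ‖(Δy, Δx)‖_Λ`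
then yield the bound.
-/

section NormalCone

variable {E : Type*} [NormedAddCommGroup E] [InnerProductSpace ℝ E]

def normalCone (K : Set E) (x : E) : Set E :=
  {w | x ∈ K ∧ ∀ v ∈ K, ⟪w, v - x⟫ ≤ 0}

theorem smul_mem_normalCone {K : Set E} {x w : E} {t : ℝ} (ht : 0 ≤ t)
    (hw : w ∈ normalCone K x) : t • w ∈ normalCone K x :=
  ⟨hw.1, fun v hv => by
    rw [real_inner_smul_left]
    exact mul_nonpos_of_nonneg_of_nonpos ht (hw.2 v hv)⟩

theorem inner_sub_sub_nonneg_of_mem_normalCone {K : Set E} {p q u w : E}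
    (hu : u ∈ normalCone K p) (hw : w ∈ normalCone K q) : 0 ≤ ⟪u - w, p - q⟫ := by
  have hup : ⟪u, q - p⟫ ≤ 0 := hu.2 q hw.1
  have hwq : ⟪w, p - q⟫ ≤ 0 := hw.2 p hu.1
  rw [← neg_sub p q, inner_neg_right] at hup
  rw [inner_sub_left]
  linarith

theorem sub_mem_normalCone_of_forall_norm_sub_le {K : Set E} (hK : Convex ℝ K) {z p : E}
    (hp : p ∈ K) (hmin : ∀ w ∈ K, ‖z - p‖ ≤ ‖z - w‖) : z - p ∈ normalCone K p := by
  have : Nonempty K := ⟨⟨p, hp⟩⟩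
  refine ⟨hp, (norm_eq_iInf_iff_real_inner_le_zero hK hp).mp (le_antisymm ?_ ?_)⟩
  · exact le_ciInf fun w => hmin w w.2
  · have hbdd : BddBelow (Set.range fun w : K => ‖z - w‖) :=
      ⟨0, by rintro _ ⟨w, rfl⟩; exact norm_nonneg _⟩
    exact ciInf_le hbdd ⟨p, hp⟩

end NormalCone

theorem sqrt_add_le_div_min_mul {τ σ a d G : ℝ} (hτ : 0 < τ) (hσ : 0 ≤ σ)
    (hG : 0 ≤ G) (h : τ * a ^ 2 + d ^ 2 ≤ σ * (a * G)) :
    Real.sqrt (τ * a ^ 2 + d ^ 2) ≤ σ / min (Real.sqrt τ) 1 * G := by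
  set μ := min (Real.sqrt τ) 1
  set s := Real.sqrt (τ * a ^ 2 + d ^ 2)
  have hμ : 0 < μ := lt_min (Real.sqrt_pos.mpr hτ) one_pos
  have hμτ : μ ^ 2 ≤ τ := by
    calc μ ^ 2 ≤ Real.sqrt τ ^ 2 := pow_le_pow_left₀ hμ.le (min_le_left _ _) 2
      _ = τ := Real.sq_sqrt hτ.le
  have hμa : μ * a ≤ s :=
    Real.le_sqrt_of_sq_le (by nlinarith [mul_le_mul_of_nonneg_right hμτ (sq_nonneg a)])
  have hs2 : s ^ 2 = τ * a ^ 2 + d ^ 2 := Real.sq_sqrt (by positivity)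
  rw [div_mul_eq_mul_div, le_div_iff₀ hμ]
  rcases (Real.sqrt_nonneg _ : 0 ≤ s).eq_or_lt with hs | hs
  · rw [show s = 0 from hs.symm, zero_mul]
    positivity
  · refine le_of_mul_le_mul_right ?_ hs
    calc s * μ * s = μ * s ^ 2 := by ring
      _ ≤ μ * (σ * (a * G)) := by rw [hs2]; exact mul_le_mul_of_nonneg_left h hμ.le
      _ = σ * G * (μ * a) := by ring
      _ ≤ σ * G * s := mul_le_mul_of_nonneg_left hμa (by positivity)

theorem stmt_18_general
    {n m : ℕ}
    (K : Set (EuclideanSpace ℝ (Fin n)))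
    (hKconv : Convex ℝ K)
    (A : EuclideanSpace ℝ (Fin n) →ₗ[ℝ] EuclideanSpace ℝ (Fin m))
    (b : EuclideanSpace ℝ (Fin m)) (c : EuclideanSpace ℝ (Fin n))
    (τk σk : ℝ) (hτ : 0 < τk) (hσ : 0 < σk)
    -- Euclidean projection onto K
    (proj : EuclideanSpace ℝ (Fin n) → EuclideanSpace ℝ (Fin n))
    (hproj : ∀ z, proj z ∈ K ∧ ∀ w ∈ K, ‖z - proj z‖ ≤ ‖z - w‖)
    -- the normal cone mapping `∂δ_K` and the operator `T_l`
    (NC : EuclideanSpace ℝ (Fin n) → Set (EuclideanSpace ℝ (Fin n)))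
    (hNC : ∀ x, NC x = {w | x ∈ K ∧ ∀ v ∈ K, ⟪w, v - x⟫ ≤ 0})
    (Tl : EuclideanSpace ℝ (Fin m) × EuclideanSpace ℝ (Fin n)
      → Set (EuclideanSpace ℝ (Fin m) × EuclideanSpace ℝ (Fin n)))
    (hTl : ∀ q, Tl q = {q' | q'.1 = A q.2 - b ∧ ∃ w ∈ NC q.2, q'.2 = c - A.adjoint q.1 + w})
    -- the current iterate and the new (arbitrary) dual iterate
    (yk : EuclideanSpace ℝ (Fin m)) (xk : EuclideanSpace ℝ (Fin n))
    (yk1 : EuclideanSpace ℝ (Fin m))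
    (xk1 : EuclideanSpace ℝ (Fin n))
    (hxk1 : xk1 = proj (xk - σk • (c - A.adjoint yk1)))
    -- `(ŷ, x̂) = P_k(y^k, x^k)`, characterized by the resolvent relation
    (yh : EuclideanSpace ℝ (Fin m)) (xh : EuclideanSpace ℝ (Fin n))
    (hP : ((τk / σk) • (yk - yh), σk⁻¹ • (xk - xh)) ∈ Tl (yh, xh))
    -- `∇ψ_k(y^{k+1})`
    (gpsi : EuclideanSpace ℝ (Fin m))
    (hgpsi : gpsi = -b + A (proj (xk + σk • (A.adjoint yk1 - c))) + (τk / σk) • (yk1 - yk)) :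
    Real.sqrt (τk * ‖yk1 - yh‖ ^ 2 + ‖xk1 - xh‖ ^ 2)
      ≤ (σk / min (Real.sqrt τk) 1) * ‖gpsi‖ := by
  set z := xk - σk • (c - A.adjoint yk1)
  rw [hTl] at hP
  obtain ⟨hAxh, w, hw, hxh⟩ := hP
  rw [hNC] at hw
  dsimp only at hAxh hw hxh
  have hnormal_k1 : z - xk1 ∈ normalCone K xk1 := by
    rw [hxk1]; exact sub_mem_normalCone_of_forall_norm_sub_le hKconv (hproj z).1 (hproj z).2
  have hmono := inner_sub_sub_nonneg_of_mem_normalCone hnormal_k1 (smul_mem_normalCone hσ.le hw)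
  have hw_eq : w = σk⁻¹ • (xk - xh) - (c - A.adjoint yh) := by rw [hxh]; abel
  have hres : z - xk1 - σk • w = σk • A.adjoint (yk1 - yh) - (xk1 - xh) := by
    simp only [hw_eq, z, map_sub]
    match_scalars <;> field_simp <;> ring
  have hAd : A (xk1 - xh) = gpsi - (τk / σk) • (yk1 - yh) := by
    have hz : xk + σk • (A.adjoint yk1 - c) = z := by simp only [z]; module
    rw [map_sub, sub_eq_iff_eq_add.mp hAxh.symm, hgpsi, hz, ← hxk1]
    module
  rw [hres, inner_sub_left, real_inner_self_eq_norm_sq, real_inner_smul_left,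
    LinearMap.adjoint_inner_left, hAd, inner_sub_right, real_inner_smul_right,
    real_inner_self_eq_norm_sq] at hmono
  have hkey : τk * ‖yk1 - yh‖ ^ 2 + ‖xk1 - xh‖ ^ 2 ≤ σk * (‖yk1 - yh‖ * ‖gpsi‖) := by
    have hcs := real_inner_le_norm (yk1 - yh) gpsi
    have hτσ : σk * (τk / σk) = τk := by field_simp
    nlinarith
  exact sqrt_add_le_div_min_mul hτ hσ.le (norm_nonneg _) hkey

/-- Bound on the weighted distance between the SNIPAL iterate
`(y^{k+1}, x^{k+1})` and the exact proximal point `P_k(y^k, x^k)` in terms of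
`‖∇ψ_k(y^{k+1})‖`, where `‖(u,v)‖_{Λ_k}² = τ_k‖u‖² + ‖v‖²`. -/
theorem stmt_18
    {n m : ℕ}
    (K : Set (EuclideanSpace ℝ (Fin n)))
    (hKne : K.Nonempty) (hKcl : IsClosed K) (hKconv : Convex ℝ K)
    (A : EuclideanSpace ℝ (Fin n) →ₗ[ℝ] EuclideanSpace ℝ (Fin m))
    (b : EuclideanSpace ℝ (Fin m)) (c : EuclideanSpace ℝ (Fin n))
    (τk σk : ℝ) (hτ : 0 < τk) (hσ : 0 < σk)
    -- Euclidean projection onto K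
    (proj : EuclideanSpace ℝ (Fin n) → EuclideanSpace ℝ (Fin n))
    (hproj : ∀ z, proj z ∈ K ∧ ∀ w ∈ K, ‖z - proj z‖ ≤ ‖z - w‖)
    -- the normal cone mapping `∂δ_K` and the operator `T_l`
    (NC : EuclideanSpace ℝ (Fin n) → Set (EuclideanSpace ℝ (Fin n)))
    (hNC : ∀ x, NC x = {w | x ∈ K ∧ ∀ v ∈ K, ⟪w, v - x⟫ ≤ 0})
    (Tl : EuclideanSpace ℝ (Fin m) × EuclideanSpace ℝ (Fin n)
      → Set (EuclideanSpace ℝ (Fin m) × EuclideanSpace ℝ (Fin n)))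
    (hTl : ∀ q, Tl q = {q' | q'.1 = A q.2 - b ∧ ∃ w ∈ NC q.2, q'.2 = c - A.adjoint q.1 + w})
    -- the current iterate and the new (arbitrary) dual iterate
    (yk : EuclideanSpace ℝ (Fin m)) (xk : EuclideanSpace ℝ (Fin n))
    (yk1 : EuclideanSpace ℝ (Fin m))
    (xk1 : EuclideanSpace ℝ (Fin n))
    (hxk1 : xk1 = proj (xk - σk • (c - A.adjoint yk1)))
    -- `(ŷ, x̂) = P_k(y^k, x^k)`, characterized by the resolvent relation
    (yh : EuclideanSpace ℝ (Fin m)) (xh : EuclideanSpace ℝ (Fin n))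
    (hP : ((τk / σk) • (yk - yh), σk⁻¹ • (xk - xh)) ∈ Tl (yh, xh))
    -- `∇ψ_k(y^{k+1})`
    (gpsi : EuclideanSpace ℝ (Fin m))
    (hgpsi : gpsi = -b + A (proj (xk + σk • (A.adjoint yk1 - c))) + (τk / σk) • (yk1 - yk)) :
    Real.sqrt (τk * ‖yk1 - yh‖ ^ 2 + ‖xk1 - xh‖ ^ 2)
      ≤ (σk / min (Real.sqrt τk) 1) * ‖gpsi‖ :=
  stmt_18_general K hKconv A b c τk σk hτ hσ proj hproj NC hNC Tl hTl yk xk yk1 xk1 hxk1 yh xh hP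
    gpsi hgpsi
end
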